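/- Let f : ℂ → ℂ be analytic in an open domain containing the real interval [0,1], with f not identically zero on [0,1]. Then lim_{n→∞} |∫₀¹ f(s) s^{n-1} ds|^{1/n} = 1. -/

import Mathlib

open Filter intervalIntegral

private lemma aux_rpow_tendsto (C p : ℝ) (hC : 0 < C) :
    Tendsto (fun n : ℕ => (C * (n:ℝ) ^ p) ^ ((n:ℝ)⁻¹)) atTop (nhds 1) := by
  have hlogn : Tendsto (fun n : ℕ => Real.log n / (n:ℝ)) atTop (nhds 0) := by
    have h := Real.tendsto_pow_log_div_mul_add_atTop 1 0 1 one_ne_zero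
    simp only [pow_one, one_mul, add_zero] at h
    exact h.comp tendsto_natCast_atTop_atTop
  have hinv : Tendsto (fun n : ℕ => (n:ℝ)⁻¹) atTop (nhds 0) :=
    tendsto_inv_atTop_zero.comp tendsto_natCast_atTop_atTop
  have hlog : Tendsto (fun n : ℕ => (Real.log C + p * Real.log n) * (n:ℝ)⁻¹) atTop (nhds 0) := by
    have h1 : Tendsto (fun n : ℕ => Real.log C * (n:ℝ)⁻¹ + p * (Real.log n / (n:ℝ)))
        atTop (nhds (Real.log C * 0 + p * 0)) :=
      (tendsto_const_nhds.mul hinv).add (tendsto_const_nhds.mul hlogn)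
    simp only [mul_zero, add_zero] at h1
    refine h1.congr fun n => ?_
    field_simp
  have hexp : Tendsto (fun n : ℕ =>
      Real.exp ((Real.log C + p * Real.log n) * (n:ℝ)⁻¹)) atTop (nhds 1) := by
    have := (Real.continuous_exp.tendsto 0).comp hlog
    rw [Real.exp_zero] at this
    exact this
  refine hexp.congr' ?_
  filter_upwards [eventually_ge_atTop 1] with n hn
  have hn0 : (0:ℝ) < n := by exact_mod_cast hn
  have hnp : 0 < (n:ℝ) ^ p := Real.rpow_pos_of_pos hn0 p
  rw [Real.rpow_def_of_pos (mul_pos hC hnp), Real.log_mul hC.ne' hnp.ne', Real.log_rpow hn0]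

set_option maxHeartbeats 1000000 in
/-- If `f : ℂ → ℂ` is analytic on an open set containing the real interval `[0,1]`
(viewed inside `ℂ`) and not identically zero on `[0,1]`, then
`lim_{n→∞} |∫₀¹ f(s) s^(n-1) ds|^(1/n) = 1`. -/
theorem nth_root_integral_limit_one
    (f : ℂ → ℂ) (U : Set ℂ) (hU : IsOpen U)
    (hsub : (Complex.ofReal '' Set.Icc (0:ℝ) 1) ⊆ U)
    (hf : DifferentiableOn ℂ f U)
    (hne : ∃ s ∈ Set.Icc (0:ℝ) 1, f s ≠ 0) :
    Tendsto (fun n : ℕ =>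
      ‖∫ s in (0:ℝ)..1, f s * (s : ℂ) ^ (n - 1)‖ ^ ((n : ℝ)⁻¹))
      atTop (nhds 1) := by
  have hmem : ∀ s : ℝ, s ∈ Set.Icc (0:ℝ) 1 → (s:ℂ) ∈ U := fun s hs => hsub ⟨s, hs, rfl⟩
  have hcont : ContinuousOn (fun s : ℝ => f s) (Set.Icc (0:ℝ) 1) :=
    hf.continuousOn.comp Complex.continuous_ofReal.continuousOn fun s hs => hmem s hs
  obtain ⟨M, hM⟩ := isCompact_Icc.exists_bound_of_continuousOn hcont
  set M' : ℝ := max M 1 with hM'def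
  have hM'1 : (1:ℝ) ≤ M' := le_max_right _ _
  have hM'0 : (0:ℝ) < M' := lt_of_lt_of_le one_pos hM'1
  have hMle : ∀ s ∈ Set.Icc (0:ℝ) 1, ‖f s‖ ≤ M' := fun s hs => (hM s hs).trans (le_max_left _ _)
  -- integrability on subintervals of [0,1]
  have hint : ∀ (n : ℕ) (a b : ℝ), a ∈ Set.Icc (0:ℝ) 1 → b ∈ Set.Icc (0:ℝ) 1 →
      IntervalIntegrable (fun s : ℝ => f s * (s:ℂ) ^ (n-1)) MeasureTheory.volume a b := by
    intro n a b ha hb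
    apply ContinuousOn.intervalIntegrable
    apply (hcont.mul (Complex.continuous_ofReal.pow (n-1)).continuousOn).mono
    rw [show Set.Icc (0:ℝ) 1 = Set.uIcc 0 1 from (Set.uIcc_of_le zero_le_one).symm] at ha hb ⊢
    exact Set.uIcc_subset_uIcc ha hb
  -- upper bound
  have hup : ∀ n : ℕ, ‖∫ s in (0:ℝ)..1, f s * (s:ℂ) ^ (n-1)‖ ≤ M' := by
    intro n
    have h := intervalIntegral.norm_integral_le_of_norm_le_const
      (C := M') (f := fun s : ℝ => f s * (s:ℂ) ^ (n-1)) (a := (0:ℝ)) (b := 1) ?_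
    · simpa using h
    · intro x hx
      rw [Set.uIoc_of_le zero_le_one] at hx
      have hx1 : x ∈ Set.Icc (0:ℝ) 1 := ⟨le_of_lt hx.1, hx.2⟩
      have h1 : ‖(x:ℂ) ^ (n-1)‖ ≤ 1 := by
        rw [norm_pow, Complex.norm_real, Real.norm_eq_abs]
        exact pow_le_one₀ (abs_nonneg x) (by rw [abs_of_nonneg hx1.1]; exact hx1.2)
      calc ‖f x * (x:ℂ) ^ (n-1)‖ = ‖f x‖ * ‖(x:ℂ) ^ (n-1)‖ := norm_mul _ _
        _ ≤ M' * 1 := mul_le_mul (hMle x hx1) h1 (norm_nonneg _) hM'0.le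
        _ = M' := mul_one _
  -- analytic setup
  have h1U : (1:ℂ) ∈ U := hmem 1 (by norm_num)
  have hfa : AnalyticOnNhd ℂ f U := hf.analyticOnNhd hU
  have ha1 : AnalyticAt ℂ f 1 := hfa 1 h1U
  have hord : analyticOrderAt f 1 ≠ ⊤ := by
    intro h
    rw [analyticOrderAt_eq_top] at h
    have himg : IsPreconnected (Complex.ofReal '' Set.Icc (0:ℝ) 1) :=
      (isPreconnected_Icc).image _ Complex.continuous_ofReal.continuousOn
    have h1mem : (1:ℂ) ∈ Complex.ofReal '' Set.Icc (0:ℝ) 1 := ⟨1, by norm_num, by norm_num⟩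
    have hIccV : Complex.ofReal '' Set.Icc (0:ℝ) 1 ⊆ connectedComponentIn U 1 :=
      himg.subset_connectedComponentIn h1mem hsub
    have hfaV : AnalyticOnNhd ℂ f (connectedComponentIn U 1) :=
      fun z hz => hfa z (connectedComponentIn_subset _ _ hz)
    have hz := hfaV.eqOn_zero_of_preconnected_of_eventuallyEq_zero
      isPreconnected_connectedComponentIn (hIccV h1mem) h
    obtain ⟨s, hs, hfs⟩ := hne
    exact hfs (hz (hIccV ⟨s, hs, rfl⟩))
  obtain ⟨k, hk⟩ := WithTop.ne_top_iff_exists.mp hord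
  obtain ⟨g, hg, hg1, hfg⟩ := (ha1.analyticOrderAt_eq_natCast (n := k)).mp hk.symm
  have hg1pos : (0:ℝ) < ‖g 1‖ := norm_pos_iff.mpr hg1
  -- eventual facts near 1
  have ev1 : ∀ᶠ z in nhds (1:ℂ), f z = (z - 1) ^ k * g z := by
    filter_upwards [hfg] with z hz using by rwa [smul_eq_mul] at hz
  have ev2 : ∀ᶠ z in nhds (1:ℂ), AnalyticAt ℂ g z := hg.eventually_analyticAt
  have ev3 : ∀ᶠ z in nhds (1:ℂ), ‖g z - g 1‖ ≤ ‖g 1‖ / 2 := by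
    have hcg : ContinuousAt (fun z : ℂ => ‖g z - g 1‖) 1 :=
      (hg.continuousAt.sub continuousAt_const).norm
    have hcg2 : Tendsto (fun z : ℂ => ‖g z - g 1‖) (nhds 1) (nhds 0) := by
      simpa using hcg.tendsto
    exact hcg2.eventually_le_const (by positivity)
  obtain ⟨ε, hε, hball⟩ := Metric.eventually_nhds_iff.mp ((ev1.and ev2).and ev3)
  set δ : ℝ := min (ε/2) (1/2) with hδdef
  have hδ0 : 0 < δ := lt_min (by positivity) (by norm_num)
  have hδhalf : δ ≤ 1/2 := min_le_right _ _
  have hδ1 : δ ≤ 1 := hδhalf.trans (by norm_num)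
  have hδs : ∀ s : ℝ, s ∈ Set.Icc (1-δ) 1 →
      (f s = ((s:ℂ) - 1) ^ k * g s ∧ AnalyticAt ℂ g s) ∧ ‖g s - g 1‖ ≤ ‖g 1‖ / 2 := by
    intro s hs
    apply hball
    have : ((s:ℂ) - 1) = ((s - 1 : ℝ) : ℂ) := by push_cast; ring
    rw [Complex.dist_eq, this, Complex.norm_real, Real.norm_eq_abs, abs_of_nonpos (by linarith [hs.2])]
    have := hs.1
    have h1 : 1 - s ≤ δ := by linarith
    linarith [min_le_left (ε/2) (1/2), hδdef ▸ h1]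
  have hgcont : ContinuousOn (fun s : ℝ => g s) (Set.Icc (1-δ) 1) := by
    intro s hs
    exact ((((hδs s hs).1.2).continuousAt).comp Complex.continuous_ofReal.continuousAt).continuousWithinAt
  have h1δmem : (1-δ) ∈ Set.Icc (0:ℝ) 1 := ⟨by linarith, by linarith⟩
  -- the key quantitative lower bound
  have key : ∀ n : ℕ, 1 ≤ n → 1/(2*(n:ℝ)) ≤ δ →
      (‖g 1‖/4) * (1/(4*(n:ℝ)))^(k+1) - M' * (1-δ)^(n-1) ≤
        ‖∫ s in (0:ℝ)..1, f s * (s:ℂ) ^ (n-1)‖ := by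
    intro n hn hnδ
    have hn0 : (0:ℝ) < n := by exact_mod_cast hn
    set t : ℝ := 1/(2*(n:ℝ)) with htdef
    have ht0 : 0 < t := by positivity
    -- gamma
    set γ : ℝ := ∫ s in (1-δ)..1, (1-s)^k * s^(n-1) with hγdef
    have hγint : IntervalIntegrable (fun s : ℝ => (1-s)^k * s^(n-1))
        MeasureTheory.volume (1-δ) 1 := by
      apply Continuous.intervalIntegrable
      exact ((continuous_const.sub continuous_id).pow k).mul (continuous_pow _)
    have hγ0 : 0 ≤ γ := by
      apply intervalIntegral.integral_nonneg (by linarith)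
      intro s hs
      have : (0:ℝ) ≤ 1 - s := by linarith [hs.2]
      have h2 : (0:ℝ) ≤ s := by linarith [hs.1]
      positivity
    -- value of complex A
    have hA : (∫ s in (1-δ)..1, ((s:ℂ) - 1)^k * (s:ℂ)^(n-1))
        = (((-1:ℝ))^k * γ : ℝ) := by
      have e1 : (∫ s in (1-δ)..1, ((s:ℂ) - 1)^k * (s:ℂ)^(n-1))
          = ∫ s in (1-δ)..1, (((s-1)^k * s^(n-1) : ℝ) : ℂ) := by
        apply intervalIntegral.integral_congr
        intro s _
        push_cast
        ring
      rw [e1, intervalIntegral.integral_ofReal]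
      have e2 : (∫ s in (1-δ)..1, (s-1)^k * s^(n-1)) = (-1:ℝ)^k * γ := by
        rw [show (∫ s in (1-δ)..1, (s-1)^k * s^(n-1))
            = ∫ s in (1-δ)..1, (-1:ℝ)^k * ((1-s)^k * s^(n-1)) from
          intervalIntegral.integral_congr (fun s _ => by
            rw [show (s - 1 : ℝ) = -(1 - s) by ring, neg_pow]; ring),
          intervalIntegral.integral_const_mul]
      exact congrArg Complex.ofReal e2
    -- main interval lower bound
    have hmain : (‖g 1‖/2) * γ ≤ ‖∫ s in (1-δ)..1, f s * (s:ℂ)^(n-1)‖ := by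
      have huIcc : Set.uIcc (1-δ) 1 = Set.Icc (1-δ) 1 := Set.uIcc_of_le (by linarith)
      have hintA : IntervalIntegrable (fun s : ℝ => ((s:ℂ)-1)^k * (s:ℂ)^(n-1))
          MeasureTheory.volume (1-δ) 1 := by
        apply Continuous.intervalIntegrable
        exact ((Complex.continuous_ofReal.sub continuous_const).pow k).mul
          (Complex.continuous_ofReal.pow _)
      have hintR : IntervalIntegrable (fun s : ℝ => ((s:ℂ)-1)^k * (g s - g 1) * (s:ℂ)^(n-1))
          MeasureTheory.volume (1-δ) 1 := by
        apply ContinuousOn.intervalIntegrable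
        rw [huIcc]
        exact ((((Complex.continuous_ofReal.sub continuous_const).pow k).continuousOn).mul
          (hgcont.sub continuousOn_const)).mul (Complex.continuous_ofReal.pow _).continuousOn
      have hsplit : (∫ s in (1-δ)..1, f s * (s:ℂ)^(n-1))
          = g 1 * (∫ s in (1-δ)..1, ((s:ℂ)-1)^k * (s:ℂ)^(n-1))
            + ∫ s in (1-δ)..1, ((s:ℂ)-1)^k * (g s - g 1) * (s:ℂ)^(n-1) := by
        rw [← intervalIntegral.integral_const_mul, ← intervalIntegral.integral_add
          (hintA.const_mul _) hintR]
        apply intervalIntegral.integral_congr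
        intro s hs
        rw [huIcc] at hs
        dsimp only
        rw [(hδs s hs).1.1]
        ring
      have hnormA : ‖g 1 * (∫ s in (1-δ)..1, ((s:ℂ)-1)^k * (s:ℂ)^(n-1))‖ = ‖g 1‖ * γ := by
        rw [hA, norm_mul, Complex.norm_real, Real.norm_eq_abs]
        congr 1
        rw [abs_mul, abs_pow, abs_neg, abs_one, one_pow, one_mul, abs_of_nonneg hγ0]
      have hnormR : ‖∫ s in (1-δ)..1, ((s:ℂ)-1)^k * (g s - g 1) * (s:ℂ)^(n-1)‖
          ≤ (‖g 1‖/2) * γ := by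
        calc ‖∫ s in (1-δ)..1, ((s:ℂ)-1)^k * (g s - g 1) * (s:ℂ)^(n-1)‖
            ≤ ∫ s in (1-δ)..1, ‖((s:ℂ)-1)^k * (g s - g 1) * (s:ℂ)^(n-1)‖ :=
              intervalIntegral.norm_integral_le_integral_norm (by linarith)
          _ ≤ ∫ s in (1-δ)..1, (‖g 1‖/2) * ((1-s)^k * s^(n-1)) := by
              apply intervalIntegral.integral_mono_on (by linarith)
              · exact hintR.norm
              · exact hγint.const_mul _
              · intro s hs
                have hs0 : (0:ℝ) ≤ s := by linarith [hs.1]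
                have hs1 : s ≤ 1 := hs.2
                rw [norm_mul, norm_mul, norm_pow, norm_pow, Complex.norm_real, Real.norm_eq_abs]
                have e2 : ‖(s:ℂ) - 1‖ = 1 - s := by
                  rw [show ((s:ℂ) - 1) = ((s - 1 : ℝ) : ℂ) by push_cast; ring,
                    Complex.norm_real, Real.norm_eq_abs, abs_of_nonpos (by linarith)]
                  ring
                rw [e2, abs_of_nonneg hs0]
                have h3 : ‖g s - g 1‖ ≤ ‖g 1‖/2 := (hδs s hs).2
                have h4 : (0:ℝ) ≤ (1-s)^k := pow_nonneg (by linarith) k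
                have h5 : (0:ℝ) ≤ s^(n-1) := pow_nonneg hs0 _
                calc (1-s)^k * ‖g (s:ℂ) - g 1‖ * s^(n-1)
                    ≤ (1-s)^k * (‖g 1‖/2) * s^(n-1) := by
                      apply mul_le_mul_of_nonneg_right _ h5
                      exact mul_le_mul_of_nonneg_left h3 h4
                  _ = (‖g 1‖/2) * ((1-s)^k * s^(n-1)) := by ring
          _ = (‖g 1‖/2) * γ := intervalIntegral.integral_const_mul _ _
      rw [hsplit]
      have htri : ‖g 1 * (∫ s in (1-δ)..1, ((s:ℂ)-1)^k * (s:ℂ)^(n-1))‖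
          ≤ ‖g 1 * (∫ s in (1-δ)..1, ((s:ℂ)-1)^k * (s:ℂ)^(n-1))
              + ∫ s in (1-δ)..1, ((s:ℂ)-1)^k * (g s - g 1) * (s:ℂ)^(n-1)‖
            + ‖∫ s in (1-δ)..1, ((s:ℂ)-1)^k * (g s - g 1) * (s:ℂ)^(n-1)‖ := by
        calc ‖g 1 * (∫ s in (1-δ)..1, ((s:ℂ)-1)^k * (s:ℂ)^(n-1))‖
            = ‖(g 1 * (∫ s in (1-δ)..1, ((s:ℂ)-1)^k * (s:ℂ)^(n-1))
                + ∫ s in (1-δ)..1, ((s:ℂ)-1)^k * (g s - g 1) * (s:ℂ)^(n-1))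
              - ∫ s in (1-δ)..1, ((s:ℂ)-1)^k * (g s - g 1) * (s:ℂ)^(n-1)‖ := by
              rw [add_sub_cancel_right]
          _ ≤ _ := norm_sub_le _ _
      rw [hnormA] at htri
      linarith
    -- gamma lower bound
    have hγlow : (1/(4*(n:ℝ)))^(k+1) * (1/2) ≤ γ := by
      have ht2 : t/2 = 1/(4*(n:ℝ)) := by rw [htdef]; ring
      have hsub1 : (1:ℝ) - t ≤ 1 - t/2 := by linarith
      have hstep1 : (∫ s in (1-t)..(1-t/2), (1-s)^k * s^(n-1)) ≤ γ := by
        apply intervalIntegral.integral_mono_interval (by linarith) hsub1 (by linarith)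
        · apply MeasureTheory.ae_restrict_of_forall_mem measurableSet_Ioc
          intro s hs
          have : (0:ℝ) ≤ 1 - s := by linarith [hs.2]
          have h2 : (0:ℝ) ≤ s := by linarith [hs.1]
          positivity
        · exact hγint
      have hn1 : (1:ℝ) ≤ (n:ℝ) := by exact_mod_cast hn
      have hbern : (1/2 : ℝ) ≤ (1-t)^(n-1) := by
        have h := one_add_mul_le_pow (a := -t) (by linarith) (n-1)
        have hcast : ((n-1 : ℕ) : ℝ) = (n:ℝ) - 1 := by
          rw [Nat.cast_sub hn]; norm_num
        rw [hcast] at h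
        have hnt : (n:ℝ) * t = 1/2 := by rw [htdef]; field_simp
        have h3 : 1 + ((n:ℝ) - 1) * -t = 1/2 + t := by linear_combination -hnt
        calc (1/2:ℝ) ≤ 1/2 + t := by linarith
          _ = 1 + ((n:ℝ)-1) * -t := h3.symm
          _ ≤ (1 + -t)^(n-1) := h
          _ = (1 - t)^(n-1) := by rw [← sub_eq_add_neg]
      have hstep2 : (t/2) * ((t/2)^k * (1/2))
          ≤ ∫ s in (1-t)..(1-t/2), (1-s)^k * s^(n-1) := by
        have hconst : (∫ s in (1-t)..(1-t/2), (t/2)^k * (1/2 : ℝ))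
            = ((1-t/2) - (1-t)) * ((t/2)^k * (1/2)) := by
          rw [intervalIntegral.integral_const, smul_eq_mul]
        have hmono : (∫ s in (1-t)..(1-t/2), (t/2)^k * (1/2 : ℝ))
            ≤ ∫ s in (1-t)..(1-t/2), (1-s)^k * s^(n-1) := by
          apply intervalIntegral.integral_mono_on hsub1
          · exact intervalIntegrable_const
          · exact (((continuous_const.sub continuous_id).pow k).mul (continuous_pow _)).intervalIntegrable _ _
          · intro s hs
            have ht12 : t ≤ 1/2 := by
              rw [htdef, div_le_div_iff₀ (by positivity) (by norm_num)]
              nlinarith [hn1]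
            have hs0 : (0:ℝ) ≤ 1 - t := by linarith
            have hs1 : t/2 ≤ 1 - s := by linarith [hs.2]
            have hs2 : 1 - t ≤ s := hs.1
            have h6 : (t/2)^k ≤ (1-s)^k := pow_le_pow_left₀ (by linarith [ht0]) hs1 k
            have h7 : (1-t)^(n-1) ≤ s^(n-1) := pow_le_pow_left₀ hs0 hs2 (n-1)
            calc (t/2)^k * (1/2 : ℝ) ≤ (t/2)^k * (1-t)^(n-1) :=
                  mul_le_mul_of_nonneg_left hbern (pow_nonneg (by linarith) k)
              _ ≤ (1-s)^k * s^(n-1) := by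
                  apply mul_le_mul h6 h7 (pow_nonneg hs0 _) (pow_nonneg (by linarith) k)
        calc (t/2) * ((t/2)^k * (1/2)) = ((1-t/2) - (1-t)) * ((t/2)^k * (1/2)) := by ring
          _ = ∫ s in (1-t)..(1-t/2), (t/2)^k * (1/2 : ℝ) := hconst.symm
          _ ≤ _ := hmono
      calc (1/(4*(n:ℝ)))^(k+1) * (1/2) = (t/2) * ((t/2)^k * (1/2)) := by
            rw [← ht2]; ring
        _ ≤ ∫ s in (1-t)..(1-t/2), (1-s)^k * s^(n-1) := hstep2
        _ ≤ γ := hstep1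
    -- tail bound
    have htail : ‖∫ s in (0:ℝ)..(1-δ), f s * (s:ℂ)^(n-1)‖ ≤ M' * (1-δ)^(n-1) := by
      have h := intervalIntegral.norm_integral_le_of_norm_le_const
        (C := M' * (1-δ)^(n-1)) (f := fun s : ℝ => f s * (s:ℂ)^(n-1)) (a := (0:ℝ)) (b := 1-δ) ?_
      · have : |1 - δ - 0| ≤ 1 := by rw [abs_of_nonneg (by linarith)]; linarith
        calc ‖∫ s in (0:ℝ)..(1-δ), f s * (s:ℂ)^(n-1)‖
            ≤ M' * (1-δ)^(n-1) * |1 - δ - 0| := h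
          _ ≤ M' * (1-δ)^(n-1) * 1 := by
              apply mul_le_mul_of_nonneg_left this
              exact mul_nonneg hM'0.le (pow_nonneg (by linarith) _)
          _ = M' * (1-δ)^(n-1) := mul_one _
      · intro x hx
        rw [Set.uIoc_of_le (by linarith)] at hx
        have hx1 : x ∈ Set.Icc (0:ℝ) 1 := ⟨le_of_lt hx.1, by linarith [hx.2]⟩
        have h1 : ‖(x:ℂ)^(n-1)‖ ≤ (1-δ)^(n-1) := by
          rw [norm_pow, Complex.norm_real, Real.norm_eq_abs, abs_of_nonneg hx1.1]
          exact pow_le_pow_left₀ hx1.1 hx.2 _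
        calc ‖f x * (x:ℂ)^(n-1)‖ = ‖f x‖ * ‖(x:ℂ)^(n-1)‖ := norm_mul _ _
          _ ≤ M' * (1-δ)^(n-1) := mul_le_mul (hMle x hx1) h1 (norm_nonneg _) hM'0.le
    -- combine
    have hsplitI : (∫ s in (0:ℝ)..1, f s * (s:ℂ)^(n-1))
        = (∫ s in (0:ℝ)..(1-δ), f s * (s:ℂ)^(n-1)) + ∫ s in (1-δ)..1, f s * (s:ℂ)^(n-1) :=
      (intervalIntegral.integral_add_adjacent_intervals
        (hint n 0 (1-δ) (by norm_num) h1δmem) (hint n (1-δ) 1 h1δmem (by norm_num))).symm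
    have htri2 : ‖∫ s in (1-δ)..1, f s * (s:ℂ)^(n-1)‖
        ≤ ‖∫ s in (0:ℝ)..1, f s * (s:ℂ)^(n-1)‖ + ‖∫ s in (0:ℝ)..(1-δ), f s * (s:ℂ)^(n-1)‖ := by
      rw [hsplitI]
      calc ‖∫ s in (1-δ)..1, f s * (s:ℂ)^(n-1)‖
          = ‖((∫ s in (0:ℝ)..(1-δ), f s * (s:ℂ)^(n-1)) + ∫ s in (1-δ)..1, f s * (s:ℂ)^(n-1))
              - ∫ s in (0:ℝ)..(1-δ), f s * (s:ℂ)^(n-1)‖ := by rw [add_sub_cancel_left]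
        _ ≤ _ := norm_sub_le _ _
    have hγchain : (‖g 1‖/4) * (1/(4*(n:ℝ)))^(k+1) ≤ (‖g 1‖/2) * γ := by
      calc (‖g 1‖/4) * (1/(4*(n:ℝ)))^(k+1)
          = (‖g 1‖/2) * ((1/(4*(n:ℝ)))^(k+1) * (1/2)) := by ring
        _ ≤ (‖g 1‖/2) * γ := mul_le_mul_of_nonneg_left hγlow (by positivity)
    linarith
  -- eventual smallness of the tail
  set r : ℝ := 1 - δ with hrdef
  have hr0 : (0:ℝ) < r := by rw [hrdef]; linarith
  have hr1 : |r| < 1 := by rw [abs_of_nonneg hr0.le, hrdef]; linarith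
  set c : ℝ := (‖g 1‖/8) * (1/4 : ℝ)^(k+1) with hcdef
  have hc0 : 0 < c := mul_pos (by linarith) (by positivity)
  have hδev : ∀ᶠ n : ℕ in atTop, 1/(2*(n:ℝ)) ≤ δ := by
    have h1 : Tendsto (fun n : ℕ => (1/2 : ℝ) * ((n:ℝ))⁻¹) atTop (nhds ((1/2) * 0)) :=
      tendsto_const_nhds.mul (tendsto_inv_atTop_zero.comp tendsto_natCast_atTop_atTop)
    rw [mul_zero] at h1
    have h2 : Tendsto (fun n : ℕ => 1/(2*(n:ℝ))) atTop (nhds 0) := by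
      refine h1.congr fun n => ?_
      rw [one_div, one_div, mul_inv]
    exact h2.eventually_le_const hδ0
  have htendtail : Tendsto (fun n : ℕ => M' * r^(n-1) * (4*(n:ℝ))^(k+1)) atTop (nhds 0) := by
    have hbase : Tendsto (fun n : ℕ => (n:ℝ)^(k+1) * r^n) atTop (nhds 0) :=
      tendsto_pow_const_mul_const_pow_of_abs_lt_one (k+1) hr1
    have h1 : Tendsto (fun n : ℕ => (M' * 4^(k+1) / r) * ((n:ℝ)^(k+1) * r^n)) atTop
        (nhds ((M' * 4^(k+1) / r) * 0)) := hbase.const_mul _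
    rw [mul_zero] at h1
    apply h1.congr'
    filter_upwards [eventually_ge_atTop 1] with n hn
    have hrn : r^n = r^(n-1) * r := by
      conv_lhs => rw [show n = (n-1)+1 from (Nat.succ_pred_eq_of_pos hn).symm]
      rw [pow_succ]
    rw [hrn, mul_pow]
    field_simp
  have hev2 : ∀ᶠ n : ℕ in atTop, M' * r^(n-1) * (4*(n:ℝ))^(k+1) ≤ ‖g 1‖/8 :=
    htendtail.eventually_le_const (by linarith)
  have hlow : ∀ᶠ n : ℕ in atTop,
      c * (n:ℝ) ^ (-((k:ℝ)+1)) ≤ ‖∫ s in (0:ℝ)..1, f s * (s:ℂ)^(n-1)‖ := by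
    filter_upwards [eventually_ge_atTop 1, hδev, hev2] with n hn hnδ hn2
    have hn0 : (0:ℝ) < n := by exact_mod_cast hn
    have h4n : (0:ℝ) < 4*(n:ℝ) := by linarith
    have hkey := key n hn hnδ
    have htail2 : M' * r^(n-1) ≤ (‖g 1‖/8) * (1/(4*(n:ℝ)))^(k+1) := by
      rw [show (1/(4*(n:ℝ)))^(k+1) = ((4*(n:ℝ))^(k+1))⁻¹ by rw [← inv_pow, one_div],
        ← div_eq_mul_inv, le_div_iff₀ (pow_pos h4n _)]
      exact hn2
    have hrpow : (n:ℝ) ^ (-((k:ℝ)+1)) = (1/(n:ℝ))^(k+1) := by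
      rw [show -((k:ℝ)+1) = -(((k+1 : ℕ)):ℝ) by push_cast; ring,
        Real.rpow_neg hn0.le, Real.rpow_natCast, ← inv_pow, one_div]
    have heq : c * (n:ℝ) ^ (-((k:ℝ)+1)) = (‖g 1‖/8) * (1/(4*(n:ℝ)))^(k+1) := by
      rw [hcdef, hrpow, mul_assoc, ← mul_pow]
      congr 2
      ring
    rw [heq]
    linarith
  have hup2 : ∀ᶠ n : ℕ in atTop,
      ‖∫ s in (0:ℝ)..1, f s * (s:ℂ)^(n-1)‖ ^ ((n:ℝ)⁻¹) ≤ (M' * (n:ℝ) ^ (0:ℝ)) ^ ((n:ℝ)⁻¹) := by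
    filter_upwards [eventually_ge_atTop 1] with n hn
    apply Real.rpow_le_rpow (norm_nonneg _) _ (inv_nonneg.mpr (Nat.cast_nonneg n))
    rw [Real.rpow_zero, mul_one]
    exact hup n
  have hlow2 : ∀ᶠ n : ℕ in atTop,
      (c * (n:ℝ) ^ (-((k:ℝ)+1))) ^ ((n:ℝ)⁻¹)
        ≤ ‖∫ s in (0:ℝ)..1, f s * (s:ℂ)^(n-1)‖ ^ ((n:ℝ)⁻¹) := by
    filter_upwards [hlow] with n hn
    exact Real.rpow_le_rpow
      (mul_nonneg hc0.le (Real.rpow_nonneg (Nat.cast_nonneg n) _)) hn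
      (inv_nonneg.mpr (Nat.cast_nonneg n))
  exact tendsto_of_tendsto_of_tendsto_of_le_of_le'
    (aux_rpow_tendsto c (-((k:ℝ)+1)) hc0) (aux_rpow_tendsto M' 0 hM'0) hlow2 hup2
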